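/- Let G be a PLB graph on n vertices with exponent γ > 1 and constant c₀. Then the maximum degree of G is at most C · n^{1/(γ−1)} for a constant C depending only on c₀ and γ. -/

import Mathlib

/-!
A vertex of degree `D ∈ [2^r, 2^(r+1)]` is itself counted on the left of the PLB inequality
at scale `r`, whose right-hand side is at most `c₀ n (2^r + 1) 2^(-rγ) ≤ 2 c₀ n 2^(r(1-γ))`.
Hence `2^(r(γ-1)) ≤ 2 c₀ n`, i.e. `2^r ≤ (2 c₀ n)^(1/(γ-1))`, and `D ≤ 2^(r+1)`.
-/

/-- The number of vertices of `G` of degree exactly `d`. -/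
noncomputable def degCount {V : Type*} [Fintype V] (G : SimpleGraph V) (d : ℕ) : ℕ :=
  {v : V | {u | G.Adj v u}.ncard = d}.ncard

/-- `G` is power-law bounded with exponent `γ` and constant `c₀` if for every `r ≥ 0`,
`Σ_{d=2^r}^{2^(r+1)} n(d) ≤ c₀ n Σ_{d=2^r}^{2^(r+1)} d^(-γ)`. -/
def IsPLB {V : Type*} [Fintype V] (G : SimpleGraph V) (γ c₀ : ℝ) : Prop :=
  ∀ r : ℕ,
    (∑ d ∈ Finset.Icc (2 ^ r : ℕ) (2 ^ (r + 1)), (degCount G d : ℝ)) ≤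
      c₀ * (Fintype.card V : ℝ) *
        ∑ d ∈ Finset.Icc (2 ^ r : ℕ) (2 ^ (r + 1)), (d : ℝ) ^ (-γ)

/-- The out-degree of `v` when each edge of `G` is directed from its lower-degree
endpoint to its higher-degree endpoint (ties broken by the linear order): the number
of neighbors `u` of `v` with `deg u > deg v`, or `deg u = deg v` and `v < u`. -/
noncomputable def outDeg {V : Type*} [Fintype V] [LinearOrder V]
    (G : SimpleGraph V) (v : V) : ℕ :=
  {u : V | G.Adj v u ∧
    ({w | G.Adj v w}.ncard < {w | G.Adj u w}.ncard ∨
      ({w | G.Adj u w}.ncard = {w | G.Adj v w}.ncard ∧ v < u))}.ncard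

open Finset

lemma sum_Icc_rpow_neg_le {a : ℕ} (b : ℕ) (ha : 0 < a) {γ : ℝ} (hγ : 0 ≤ γ) :
    ∑ d ∈ Icc a b, (d : ℝ) ^ (-γ) ≤ #(Icc a b) * (a : ℝ) ^ (-γ) := by
  rw [← nsmul_eq_mul]
  refine sum_le_card_nsmul _ _ _ fun d hd => ?_
  exact Real.rpow_le_rpow_of_nonpos (by positivity) (by exact_mod_cast (mem_Icc.mp hd).1)
    (by linarith)

lemma sum_Icc_two_pow_rpow_neg_le (r : ℕ) {γ : ℝ} (hγ : 0 ≤ γ) :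
    ∑ d ∈ Icc (2 ^ r : ℕ) (2 ^ (r + 1)), (d : ℝ) ^ (-γ) ≤ 2 * (2 ^ r : ℝ) ^ (1 - γ) := by
  have hcard : (#(Icc (2 ^ r : ℕ) (2 ^ (r + 1))) : ℝ) ≤ 2 * 2 ^ r := by
    rw [Nat.card_Icc]
    have : 2 ^ (r + 1) + 1 - 2 ^ r ≤ 2 * 2 ^ r := by
      have := Nat.one_le_two_pow (n := r)
      rw [pow_succ]; omega
    exact_mod_cast this
  have hpos : (0 : ℝ) < 2 ^ r := by positivity
  calc ∑ d ∈ Icc (2 ^ r : ℕ) (2 ^ (r + 1)), (d : ℝ) ^ (-γ)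
      ≤ #(Icc (2 ^ r : ℕ) (2 ^ (r + 1))) * (2 ^ r : ℝ) ^ (-γ) := by
        exact_mod_cast sum_Icc_rpow_neg_le _ (by positivity) hγ
    _ ≤ 2 * 2 ^ r * (2 ^ r : ℝ) ^ (-γ) := by gcongr
    _ = 2 * (2 ^ r : ℝ) ^ (1 - γ) := by
        rw [sub_eq_add_neg, Real.rpow_add hpos, Real.rpow_one, mul_assoc]

variable {V : Type*} [Fintype V] {G : SimpleGraph V}

lemma one_le_sum_degCount {a b : ℕ} {v : V} (hv : {u | G.Adj v u}.ncard ∈ Icc a b) :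
    1 ≤ ∑ d ∈ Icc a b, (degCount G d : ℝ) := by
  have hcount : 1 ≤ degCount G {u | G.Adj v u}.ncard :=
    (Set.ncard_pos (Set.toFinite _)).mpr ⟨v, rfl⟩
  calc (1 : ℝ) ≤ degCount G {u | G.Adj v u}.ncard := by exact_mod_cast hcount
    _ ≤ ∑ d ∈ Icc a b, (degCount G d : ℝ) :=
        single_le_sum (f := fun d => (degCount G d : ℝ)) (fun _ _ => by positivity) hv

lemma IsPLB.two_pow_rpow_le {γ c₀ : ℝ} (hG : IsPLB G γ c₀) (hγ : 0 ≤ γ) (hc₀ : 0 ≤ c₀)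
    {v : V} {r : ℕ} (hv : {u | G.Adj v u}.ncard ∈ Icc (2 ^ r) (2 ^ (r + 1))) :
    (2 ^ r : ℝ) ^ (γ - 1) ≤ 2 * c₀ * Fintype.card V := by
  have hpos : (0 : ℝ) < (2 ^ r : ℝ) ^ (γ - 1) := by positivity
  have hscale : 1 ≤ c₀ * Fintype.card V * (2 * (2 ^ r : ℝ) ^ (1 - γ)) :=
    calc (1 : ℝ) ≤ _ := one_le_sum_degCount hv
      _ ≤ _ := hG r
      _ ≤ _ := by gcongr; exact sum_Icc_two_pow_rpow_neg_le r hγ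
  rw [← neg_sub, Real.rpow_neg (by positivity), ← mul_assoc, mul_comm _ (2 : ℝ), ← mul_assoc,
    le_mul_inv_iff₀ hpos, one_mul] at hscale
  exact hscale

lemma IsPLB.degree_le {γ c₀ : ℝ} (hG : IsPLB G γ c₀) (hγ : 1 < γ) (hc₀ : 0 ≤ c₀) (v : V) :
    ({u | G.Adj v u}.ncard : ℝ) ≤ 2 * (2 * c₀ * Fintype.card V) ^ (1 / (γ - 1)) := by
  set D := {u | G.Adj v u}.ncard
  obtain hD | hD := eq_or_ne D 0
  · rw [hD, Nat.cast_zero]; positivity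
  set r := Nat.log 2 D
  have hlo : 2 ^ r ≤ D := Nat.pow_log_le_self 2 hD
  have hhi : D ≤ 2 ^ (r + 1) := (Nat.lt_pow_succ_log_self one_lt_two D).le
  have hscale : (2 ^ r : ℝ) ≤ (2 * c₀ * Fintype.card V) ^ (1 / (γ - 1)) := by
    rw [one_div, Real.le_rpow_inv_iff_of_pos (by positivity) (by positivity) (by linarith)]
    exact hG.two_pow_rpow_le (by linarith) hc₀ (mem_Icc.mpr ⟨hlo, hhi⟩)
  calc (D : ℝ) ≤ 2 ^ (r + 1) := by exact_mod_cast hhi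
    _ = 2 * 2 ^ r := by ring
    _ ≤ _ := by gcongr

/-- The maximum degree of a PLB graph with exponent `γ > 1` is at most
`C n^(1/(γ-1))` for a constant `C` depending only on `c₀` and `γ`. -/
theorem plb_max_degree_bound (γ c₀ : ℝ) (hγ : 1 < γ) (hc₀ : 0 < c₀) :
    ∃ C : ℝ, 0 < C ∧
      ∀ (V : Type) [Fintype V] (G : SimpleGraph V), IsPLB G γ c₀ →
        ∀ v : V, ({u | G.Adj v u}.ncard : ℝ) ≤
          C * (Fintype.card V : ℝ) ^ (1 / (γ - 1)) := by
  refine ⟨2 * (2 * c₀) ^ (1 / (γ - 1)), by positivity, fun V _ G hG v => ?_⟩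
  calc ({u | G.Adj v u}.ncard : ℝ) ≤ 2 * (2 * c₀ * Fintype.card V) ^ (1 / (γ - 1)) :=
        hG.degree_le hγ hc₀.le v
    _ = 2 * (2 * c₀) ^ (1 / (γ - 1)) * (Fintype.card V : ℝ) ^ (1 / (γ - 1)) := by
        rw [Real.mul_rpow (by positivity) (by positivity), mul_assoc]
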